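/- Let ω be a weight on the upper half-plane 𝓗 with 0 < ω(Q_I) < ∞ for every dyadic Carleson box, and let μ be a positive Borel measure on 𝓗. Define g(z) = ∫_𝓗 ω(Q_ξ)^{−1} χ_{Q_ξ}(z) dμ(ξ), where Q_ξ is the smallest Carleson box Q_I with I in the standard dyadic grid D containing ξ. Then there is an absolute constant c > 0 such that for every z ∈ 𝓗, M_{d,ω} g(z) ≥ c · K_{d,μ}(z), where K_{d,μ}(z) = sup {μ(Q_I)/ω(Q_I) : I ∈ D with z ∈ Q_I}. -/
import Mathlib


open MeasureTheory Set
open scoped ENNReal NNReal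

noncomputable section

/-- The upper half-plane `𝓗`. -/
def UHP : Set ℂ := {z : ℂ | 0 < z.im}

/-- The Carleson box `Q_I` over the bounded interval `I = [a, b)`. -/
def Box (a b : ℝ) : Set ℂ := {z : ℂ | z.re ∈ Set.Ico a b ∧ z.im ∈ Set.Ioo 0 (b - a)}

/-- The `ω`-mass of a set, `ω(S) = ∫_S ω dV`. -/
def wMass (ω : ℂ → ℝ≥0∞) (S : Set ℂ) : ℝ≥0∞ := ∫⁻ z in S, ω z

/-- The Carleson box over the standard dyadic interval `[m·2^j, (m+1)·2^j)`. -/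
def dBox (j m : ℤ) : Set ℂ := Box ((2 : ℝ) ^ j * (m : ℝ)) ((2 : ℝ) ^ j * ((m : ℝ) + 1))

/-- The scale of the smallest dyadic Carleson box containing `z`: the least `j`
with `2^j > im z`. -/
def sIdxJ (z : ℂ) : ℤ := ⌊Real.logb 2 z.im⌋ + 1

/-- The position of the smallest dyadic Carleson box containing `z`. -/
def sIdxM (z : ℂ) : ℤ := ⌊z.re / (2 : ℝ) ^ sIdxJ z⌋

/-- The smallest dyadic Carleson box `Q_z` containing `z ∈ 𝓗`. -/
def sBox (z : ℂ) : Set ℂ := dBox (sIdxJ z) (sIdxM z)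

/-- The dyadic weighted maximal function `M_{d,ω} g` of a nonnegative function `g`
(standard dyadic grid). -/
def maxDE (ω : ℂ → ℝ≥0∞) (g : ℂ → ℝ≥0∞) (z : ℂ) : ℝ≥0∞ :=
  ⨆ (j : ℤ) (m : ℤ) (_ : z ∈ dBox j m),
    (wMass ω (dBox j m))⁻¹ * ∫⁻ w in dBox j m, g w * ω w

/-- `K_{d,μ}(z) = sup { μ(Q_I)/ω(Q_I) : I ∈ D with z ∈ Q_I }` (standard dyadic grid). -/
def KmuD (ω : ℂ → ℝ≥0∞) (μ : Measure ℂ) (z : ℂ) : ℝ≥0∞ :=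
  ⨆ (j : ℤ) (m : ℤ) (_ : z ∈ dBox j m), μ (dBox j m) / wMass ω (dBox j m)

/-- The function `g(z) = ∫_𝓗 ω(Q_ξ)⁻¹ χ_{Q_ξ}(z) dμ(ξ)` built from the measure `μ`. -/
def gFun (ω : ℂ → ℝ≥0∞) (μ : Measure ℂ) (z : ℂ) : ℝ≥0∞ :=
  ∫⁻ ξ in UHP, (sBox ξ).indicator (fun _ => (wMass ω (sBox ξ))⁻¹) z ∂μ

lemma two_zpow_pos (j : ℤ) : (0:ℝ) < (2:ℝ) ^ j := zpow_pos (by norm_num) j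

lemma cast_two_zpow (j : ℤ) : ((2:ℕ):ℝ) ^ j = (2:ℝ) ^ j := by norm_num

lemma mem_dBox_iff {z : ℂ} {j m : ℤ} :
    z ∈ dBox j m ↔ ((2:ℝ)^j * m ≤ z.re ∧ z.re < (2:ℝ)^j * (m+1)) ∧
      (0 < z.im ∧ z.im < (2:ℝ)^j) := by
  have : (2:ℝ)^j * ((m:ℝ)+1) - (2:ℝ)^j * m = (2:ℝ)^j := by ring
  simp [dBox, Box, Set.mem_Ico, Set.mem_Ioo, this]

lemma sIdxJ_eq (z : ℂ) (hz : 0 ≤ z.im) : sIdxJ z = Int.log 2 z.im + 1 := by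
  have := Real.floor_logb_natCast (b := 2) (r := z.im) hz
  simp only [sIdxJ]
  rw [show ((2:ℕ):ℝ) = (2:ℝ) by norm_num] at this
  rw [this]

lemma im_lt_zpow_sIdxJ {z : ℂ} (hz : 0 < z.im) : z.im < (2:ℝ) ^ sIdxJ z := by
  rw [sIdxJ_eq z hz.le, ← cast_two_zpow]
  exact Int.lt_zpow_succ_log_self (by norm_num) z.im

lemma mem_sBox {z : ℂ} (hz : z ∈ UHP) : z ∈ sBox z := by
  have him : 0 < z.im := hz
  have h2 : (0:ℝ) < (2:ℝ) ^ sIdxJ z := two_zpow_pos _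
  rw [sBox, mem_dBox_iff]
  refine ⟨⟨?_, ?_⟩, him, im_lt_zpow_sIdxJ him⟩
  · rw [mul_comm, ← le_div_iff₀ h2]
    exact Int.floor_le _
  · rw [mul_comm, ← div_lt_iff₀ h2]
    exact Int.lt_floor_add_one _

lemma sIdxJ_le {ξ : ℂ} {j m : ℤ} (hξ : ξ ∈ dBox j m) : sIdxJ ξ ≤ j := by
  rw [mem_dBox_iff] at hξ
  obtain ⟨-, him, hlt⟩ := hξ
  rw [sIdxJ_eq ξ him.le, Int.add_one_le_iff]
  have : ¬ ((2:ℝ)^j ≤ ξ.im) := not_le.mpr hlt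
  rw [← cast_two_zpow] at this
  rw [Int.zpow_le_iff_le_log (by norm_num) him] at this
  exact not_le.mp this

lemma sBox_subset {ξ : ℂ} {j m : ℤ} (hξ : ξ ∈ dBox j m) : sBox ξ ⊆ dBox j m := by
  have hj' : sIdxJ ξ ≤ j := sIdxJ_le hξ
  set j' := sIdxJ ξ with hj'def
  have h2j : (0:ℝ) < (2:ℝ) ^ j := two_zpow_pos j
  have h2j' : (0:ℝ) < (2:ℝ) ^ j' := two_zpow_pos j'
  rw [mem_dBox_iff] at hξ
  obtain ⟨⟨hre1, hre2⟩, him, himlt⟩ := hξ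
  set k : ℕ := (j - j').toNat with hk
  have hjk : j = j' + k := by
    rw [hk, Int.toNat_of_nonneg (by omega)]; ring
  have hpow : (2:ℝ) ^ j = (2:ℝ) ^ j' * (2:ℝ) ^ k := by
    rw [hjk, zpow_add₀ (by norm_num : (2:ℝ) ≠ 0), zpow_natCast]
  have hcast : ((2^k * m : ℤ) : ℝ) = (2:ℝ)^k * m := by push_cast; ring
  -- bounds on m' := sIdxM ξ
  have hm1 : (2:ℕ)^k * m ≤ sIdxM ξ := by
    rw [sIdxM, ← hj'def, Int.le_floor]
    rw [le_div_iff₀ h2j']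
    push_cast
    calc ((2:ℝ)^k * m) * (2:ℝ)^j' = (2:ℝ)^j * m := by rw [hpow]; ring
    _ ≤ ξ.re := hre1
  have hm2 : sIdxM ξ + 1 ≤ (2:ℕ)^k * (m + 1) := by
    have : sIdxM ξ < (2:ℕ)^k * (m+1) := by
      rw [sIdxM, ← hj'def, Int.floor_lt]
      rw [div_lt_iff₀ h2j']
      push_cast
      calc ξ.re < (2:ℝ)^j * (m+1) := hre2
      _ = (2:ℝ)^k * ((m:ℝ)+1) * (2:ℝ)^j' := by rw [hpow]; ring
    omega
  intro w hw
  rw [sBox, mem_dBox_iff] at hw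
  rw [← hj'def] at hw
  obtain ⟨⟨hw1, hw2⟩, hw3, hw4⟩ := hw
  rw [mem_dBox_iff]
  refine ⟨⟨?_, ?_⟩, hw3, ?_⟩
  · calc (2:ℝ)^j * m = (2:ℝ)^j' * ((2:ℝ)^k * m) := by rw [hpow]; ring
    _ ≤ (2:ℝ)^j' * (sIdxM ξ : ℝ) := by
        apply mul_le_mul_of_nonneg_left _ h2j'.le
        exact_mod_cast hm1
    _ ≤ w.re := hw1
  · calc w.re < (2:ℝ)^j' * ((sIdxM ξ : ℝ) + 1) := hw2
    _ ≤ (2:ℝ)^j' * ((2:ℝ)^k * ((m:ℝ)+1)) := by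
        apply mul_le_mul_of_nonneg_left _ h2j'.le
        exact_mod_cast hm2
    _ = (2:ℝ)^j * (m+1) := by rw [hpow]; ring
  · calc w.im < (2:ℝ)^j' := hw4
    _ ≤ (2:ℝ)^j := by
        rw [hpow]
        nlinarith [h2j', one_le_pow₀ (by norm_num : (1:ℝ) ≤ 2) (n := k)]

lemma measurableSet_dBox' (j m : ℤ) : MeasurableSet (dBox j m) :=
  (Complex.measurable_re measurableSet_Ico).inter
    (Complex.measurable_im measurableSet_Ioo)

lemma measurable_sIdxJ : Measurable sIdxJ := by
  have h1 : Measurable fun z : ℂ => Real.logb 2 z.im := by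
    unfold Real.logb
    exact (Real.measurable_log.comp Complex.measurable_im).div_const _
  exact (h1.floor).add_const 1

lemma measurable_sIdxM : Measurable sIdxM := by
  have h2 : Measurable fun z : ℂ => (2:ℝ) ^ sIdxJ z :=
    (measurable_from_top (f := fun j : ℤ => (2:ℝ)^j)).comp measurable_sIdxJ
  exact (Complex.measurable_re.div h2).floor


lemma measurableSet_A (p : ℤ × ℤ) :
    MeasurableSet {ξ : ℂ | sIdxJ ξ = p.1 ∧ sIdxM ξ = p.2} := by
  have h1 : MeasurableSet (sIdxJ ⁻¹' {p.1}) := measurable_sIdxJ (measurableSet_singleton _)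
  have h2 : MeasurableSet (sIdxM ⁻¹' {p.2}) := measurable_sIdxM (measurableSet_singleton _)
  have : {ξ : ℂ | sIdxJ ξ = p.1 ∧ sIdxM ξ = p.2} = sIdxJ ⁻¹' {p.1} ∩ sIdxM ⁻¹' {p.2} := by
    ext ξ; simp
  rw [this]; exact h1.inter h2

lemma key_lintegral (ω : ℂ → ℝ≥0∞) (hω : Measurable ω)
    (hpos : ∀ j m : ℤ, 0 < wMass ω (dBox j m)) (hfin : ∀ j m : ℤ, wMass ω (dBox j m) < ⊤)
    (μ : Measure ℂ) (j m : ℤ) :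
    μ (dBox j m) ≤ ∫⁻ w in dBox j m, gFun ω μ w * ω w := by
  set Q := dBox j m with hQ
  have hQm : MeasurableSet Q := measurableSet_dBox' j m
  have hQU : Q ⊆ UHP := fun w hw => (mem_dBox_iff.mp hw).2.1
  set F : ℂ → ℂ → ℝ≥0∞ :=
    fun ξ w => (sBox ξ).indicator (fun _ => (wMass ω (sBox ξ))⁻¹) w with hF
  set A : ℤ × ℤ → Set ℂ := fun p => {ξ : ℂ | sIdxJ ξ = p.1 ∧ sIdxM ξ = p.2} with hA
  set k : ℤ × ℤ → ℂ → ℝ≥0∞ :=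
    fun p w => (dBox p.1 p.2).indicator (fun _ => (wMass ω (dBox p.1 p.2))⁻¹) w with hk
  set ν : Measure ℂ := (volume.restrict Q).withDensity ω with hν
  set μ'' : Measure ℂ := μ.restrict Q with hμ''
  have hAmeas : ∀ p, MeasurableSet (A p) := measurableSet_A
  have hkmeas : ∀ p, Measurable (k p) :=
    fun p => measurable_const.indicator (measurableSet_dBox' _ _)
  have hωae : ∀ᵐ w ∂(volume.restrict Q), ω w < ∞ :=
    ae_lt_top hω (by exact (hfin j m).ne)
  -- step 1 : rewrite target as integral against ν
  have step1 : ∫⁻ w in Q, gFun ω μ w * ω w = ∫⁻ w, gFun ω μ w ∂ν := by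
    rw [hν, lintegral_withDensity_eq_lintegral_mul_non_measurable _ hω hωae]
    exact lintegral_congr fun w => (mul_comm _ _)
  -- step 2 : restrict the defining integral of gFun
  have step2 : ∫⁻ w, (∫⁻ ξ, F ξ w ∂μ'') ∂ν ≤ ∫⁻ w, gFun ω μ w ∂ν := by
    refine lintegral_mono fun w => ?_
    exact lintegral_mono' (Measure.restrict_mono hQU le_rfl) le_rfl
  -- decomposition of F
  have hFdec : ∀ ξ w, F ξ w = ∑' p : ℤ × ℤ, (A p).indicator (fun _ => k p w) ξ := by
    intro ξ w
    rw [tsum_eq_single ((sIdxJ ξ, sIdxM ξ) : ℤ × ℤ)]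
    · rw [Set.indicator_of_mem (by exact ⟨rfl, rfl⟩)]
      rfl
    · intro p hp
      rw [Set.indicator_of_notMem]
      intro hmem
      exact hp (Prod.ext hmem.1.symm hmem.2.symm)
  -- inner integral in ξ
  have inner : ∀ w, (∫⁻ ξ, F ξ w ∂μ'') = ∑' p : ℤ × ℤ, k p w * μ'' (A p) := by
    intro w
    calc (∫⁻ ξ, F ξ w ∂μ'')
        = ∫⁻ ξ, (∑' p : ℤ × ℤ, (A p).indicator (fun _ => k p w) ξ) ∂μ'' :=
          lintegral_congr fun ξ => hFdec ξ w
      _ = ∑' p : ℤ × ℤ, ∫⁻ ξ, (A p).indicator (fun _ => k p w) ξ ∂μ'' :=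
          lintegral_tsum fun p => (measurable_const.indicator (hAmeas p)).aemeasurable
      _ = ∑' p : ℤ × ℤ, k p w * μ'' (A p) := by
          refine tsum_congr fun p => ?_
          rw [lintegral_indicator (hAmeas p), setLIntegral_const]
  -- outer integral in w
  have outer : ∫⁻ w, (∫⁻ ξ, F ξ w ∂μ'') ∂ν
      = ∑' p : ℤ × ℤ, (wMass ω (dBox p.1 p.2))⁻¹ * ν (dBox p.1 p.2) * μ'' (A p) := by
    calc ∫⁻ w, (∫⁻ ξ, F ξ w ∂μ'') ∂ν
        = ∫⁻ w, (∑' p : ℤ × ℤ, k p w * μ'' (A p)) ∂ν := lintegral_congr inner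
      _ = ∑' p : ℤ × ℤ, ∫⁻ w, k p w * μ'' (A p) ∂ν :=
          lintegral_tsum fun p => ((hkmeas p).mul_const _).aemeasurable
      _ = ∑' p : ℤ × ℤ, (wMass ω (dBox p.1 p.2))⁻¹ * ν (dBox p.1 p.2) * μ'' (A p) := by
          refine tsum_congr fun p => ?_
          rw [lintegral_mul_const _ (hkmeas p), hk]
          simp only
          rw [lintegral_indicator (measurableSet_dBox' p.1 p.2), setLIntegral_const]
  -- partition identity
  have hUnion : (⋃ p : ℤ × ℤ, A p) = Set.univ :=
    Set.eq_univ_of_forall fun ξ => Set.mem_iUnion.mpr ⟨(sIdxJ ξ, sIdxM ξ), rfl, rfl⟩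
  have hdisj : Pairwise (Function.onFun Disjoint A) := by
    intro p q hpq
    refine Set.disjoint_left.mpr fun ξ h1 h2 => hpq ?_
    exact Prod.ext (h1.1.symm.trans h2.1) (h1.2.symm.trans h2.2)
  have hpart : μ Q = ∑' p : ℤ × ℤ, μ'' (A p) := by
    rw [← measure_iUnion hdisj hAmeas, hUnion, hμ'', Measure.restrict_apply_univ]
  -- key termwise inequality
  have hterm : ∀ p : ℤ × ℤ,
      μ'' (A p) ≤ (wMass ω (dBox p.1 p.2))⁻¹ * ν (dBox p.1 p.2) * μ'' (A p) := by
    intro p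
    rcases eq_or_ne (μ'' (A p)) 0 with h0 | h0
    · rw [h0, mul_zero]
    · have hne : (A p ∩ Q).Nonempty := by
        refine Set.nonempty_iff_ne_empty.mpr fun hemp => h0 ?_
        rw [hμ'', Measure.restrict_apply (hAmeas p), hemp, measure_empty]
      obtain ⟨ξ, hξA, hξQ⟩ := hne
      have hbox : dBox p.1 p.2 = sBox ξ := by
        rw [sBox, hξA.1, hξA.2]
      have hsub : dBox p.1 p.2 ⊆ Q := by rw [hbox]; exact sBox_subset hξQ
      have hνS : ν (dBox p.1 p.2) = wMass ω (dBox p.1 p.2) := by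
        rw [hν, withDensity_apply _ (measurableSet_dBox' p.1 p.2),
          Measure.restrict_restrict (measurableSet_dBox' p.1 p.2),
          Set.inter_eq_self_of_subset_left hsub]
        rfl
      rw [hνS, ENNReal.inv_mul_cancel (hpos _ _).ne' (hfin _ _).ne, one_mul]
  calc μ Q = ∑' p : ℤ × ℤ, μ'' (A p) := hpart
    _ ≤ ∑' p : ℤ × ℤ, (wMass ω (dBox p.1 p.2))⁻¹ * ν (dBox p.1 p.2) * μ'' (A p) :=
        ENNReal.tsum_le_tsum hterm
    _ = ∫⁻ w, (∫⁻ ξ, F ξ w ∂μ'') ∂ν := outer.symm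
    _ ≤ ∫⁻ w, gFun ω μ w ∂ν := step2
    _ = ∫⁻ w in Q, gFun ω μ w * ω w := step1.symm

/-- For a weight with `0 < ω(Q_I) < ∞` on all dyadic Carleson boxes and a positive Borel
measure `μ` on `𝓗`, there is an absolute constant `c > 0` with
`M_{d,ω} g(z) ≥ c · K_{d,μ}(z)` for every `z ∈ 𝓗`, where `g` is as above. -/
theorem maximal_gFun_ge_KmuD (ω : ℂ → ℝ≥0∞) (hω : Measurable ω)
    (hpos : ∀ j m : ℤ, 0 < wMass ω (dBox j m)) (hfin : ∀ j m : ℤ, wMass ω (dBox j m) < ⊤)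
    (μ : Measure ℂ) :
    ∃ c : ℝ≥0∞, 0 < c ∧ c < ⊤ ∧ ∀ z ∈ UHP,
      c * KmuD ω μ z ≤ maxDE ω (gFun ω μ) z := by
  refine ⟨1, zero_lt_one, ENNReal.one_lt_top, fun z _ => ?_⟩
  rw [one_mul, KmuD]
  refine iSup_le fun j => iSup_le fun m => iSup_le fun hzQ => ?_
  refine le_trans ?_
    (le_iSup_of_le j (le_iSup_of_le m (le_iSup_of_le hzQ le_rfl)) :
      _ ≤ maxDE ω (gFun ω μ) z)
  rw [ENNReal.div_eq_inv_mul]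
  exact mul_le_mul_right (key_lintegral ω hω hpos hfin μ j m) _
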